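/- arXiv:2306.08282 — 3 statements merged into one kernel-verified Lean document; each statement's English description precedes it below -/
import Mathlib

section
/- For each u ≥ a the infinite product ∏_{k=0}^∞ (F^k(u)/a) converges to a positive real number, so F̃(u) is well defined; F̃(a) = a; F̃ is strictly increasing and continuous on [a,∞) with F̃(u) → ∞ as u → ∞; and F̃ admits the expression F̃(u) = exp(V(u)), where V(u) = log a + ∫_a^u ( ∑_{k=0}^∞ 1/(∏_{j=0}^k F^j(t)) ) dt. -/
open Real MeasureTheory Filter Topology Set

/-- `F(u) = a - log a + log u`. -/
noncomputable def Fa (a : ℝ) : ℝ → ℝ := fun u => a - Real.log a + Real.log u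

/-- `F̃(u) = a · ∏_{k=0}^∞ (F^k(u)/a)`. -/
noncomputable def Ftilde (a : ℝ) (u : ℝ) : ℝ := a * ∏' k : ℕ, ((Fa a)^[k] u / a)

/-- `φ(u) = a + ∫_a^u dt / F̃(t)`. -/
noncomputable def phiFun (a : ℝ) (u : ℝ) : ℝ := a + ∫ t in a..u, 1 / Ftilde a t

/-!
Since `F(u) - a = log (u / a)`, each factor is `F^k(u) / a = exp (F^{k+1}(u) - a)`, so
`F̃(u) = a · exp S(u)` with `S(u) = ∑_{k ≥ 1} (F^k(u) - a)`. The bound `log x ≤ x - 1` gives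
`F(u) - a ≤ (u - a) / a`, so the excesses `F^k(u) - a` decay geometrically and `S` converges,
locally uniformly. `S(a) = 0`, `S` is strictly increasing since every `F^k` is, and
`S(u) ≥ F(u) - a = log (u / a)` gives `F̃(u) ≥ u`. Finally, by the chain rule
`(F^{k+1})' = 1 / ∏_{j ≤ k} F^j`, and integrating term by term gives
`S(u) = ∫_a^u ∑_k 1 / ∏_{j ≤ k} F^j`.
-/

variable {a u : ℝ}

lemma Fa_sub_self_eq_log_div (ha : a ≠ 0) (hu : u ≠ 0) : Fa a u - a = log (u / a) := by
  rw [Fa, log_div hu ha]; ring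

lemma Fa_iterate_self (k : ℕ) : (Fa a)^[k] a = a :=
  Function.iterate_fixed (by simp [Fa]) k

lemma mapsTo_Fa (ha : 0 < a) : MapsTo (Fa a) (Ici a) (Ici a) := fun u (hu : a ≤ u) => by
  have := log_le_log ha hu
  simp only [Fa, mem_Ici]; linarith

lemma le_Fa_iterate (ha : 0 < a) (hu : a ≤ u) (k : ℕ) : a ≤ (Fa a)^[k] u :=
  (mapsTo_Fa ha).iterate k hu

lemma strictMonoOn_Fa (ha : 0 < a) : StrictMonoOn (Fa a) (Ici a) :=
  fun u (hu : a ≤ u) v _ huv => by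
  have := log_lt_log (ha.trans_le hu) huv
  simp only [Fa]; linarith

lemma strictMonoOn_Fa_iterate (ha : 0 < a) : ∀ k : ℕ, StrictMonoOn (Fa a)^[k] (Ici a)
  | 0 => strictMono_id.strictMonoOn _
  | k + 1 => by
    rw [Function.iterate_succ]
    exact (strictMonoOn_Fa_iterate ha k).comp (strictMonoOn_Fa ha) (mapsTo_Fa ha)

lemma Fa_sub_le (ha : 0 < a) (hu : 0 < u) : Fa a u - a ≤ (u - a) * a⁻¹ := by
  rw [Fa_sub_self_eq_log_div ha.ne' hu.ne']
  calc log (u / a) ≤ u / a - 1 := log_le_sub_one_of_pos (by positivity)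
    _ = (u - a) * a⁻¹ := by field_simp

lemma Fa_iterate_sub_le (ha : 0 < a) (hu : a ≤ u) (k : ℕ) :
    (Fa a)^[k] u - a ≤ (u - a) * a⁻¹ ^ k := by
  induction k with
  | zero => simp
  | succ k ih =>
    rw [Function.iterate_succ_apply']
    calc Fa a ((Fa a)^[k] u) - a ≤ ((Fa a)^[k] u - a) * a⁻¹ :=
          Fa_sub_le ha (ha.trans_le (le_Fa_iterate ha hu k))
      _ ≤ (u - a) * a⁻¹ ^ k * a⁻¹ := by gcongr
      _ = (u - a) * a⁻¹ ^ (k + 1) := by ring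

noncomputable def excessSum (a u : ℝ) : ℝ := ∑' k : ℕ, ((Fa a)^[k + 1] u - a)

lemma summable_Fa_iterate_succ_sub (ha : 1 < a) (hu : a ≤ u) :
    Summable fun k : ℕ => (Fa a)^[k + 1] u - a := by
  have ha0 : 0 < a := one_pos.trans ha
  have hgeom : Summable fun k : ℕ => (u - a) * a⁻¹ ^ k :=
    (summable_geometric_of_lt_one (by positivity) (inv_lt_one_of_one_lt₀ ha)).mul_left _
  exact .of_nonneg_of_le (fun k => sub_nonneg.2 (le_Fa_iterate ha0 hu _))
    (fun k => Fa_iterate_sub_le ha0 hu (k + 1)) ((summable_nat_add_iff 1).2 hgeom)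

lemma excessSum_self : excessSum a a = 0 := by
  simp [excessSum, Fa_iterate_self]

lemma strictMonoOn_excessSum (ha : 1 < a) : StrictMonoOn (excessSum a) (Ici a) :=
  fun u (hu : a ≤ u) v (hv : a ≤ v) huv => by
    have ha0 : 0 < a := one_pos.trans ha
    refine Summable.tsum_lt_tsum_of_nonneg (i := 0)
      (fun k => sub_nonneg.2 (le_Fa_iterate ha0 hu _)) (fun k => ?_) ?_
      (summable_Fa_iterate_succ_sub ha hv)
    · exact sub_le_sub_right ((strictMonoOn_Fa_iterate ha0 (k + 1)).monotoneOn hu hv huv.le) a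
    · exact sub_lt_sub_right (strictMonoOn_Fa_iterate ha0 1 hu hv huv) a

lemma hasDerivAt_Fa_iterate (ha : 0 < a) {t : ℝ} (ht : a ≤ t) (k : ℕ) :
    HasDerivAt (Fa a)^[k] (∏ j ∈ Finset.range k, (Fa a)^[j] t)⁻¹ t := by
  induction k with
  | zero => simpa using hasDerivAt_id t
  | succ k ih =>
    have hF : HasDerivAt (Fa a) ((Fa a)^[k] t)⁻¹ ((Fa a)^[k] t) :=
      (hasDerivAt_log (ha.trans_le (le_Fa_iterate ha ht k)).ne').const_add _
    rw [Finset.prod_range_succ, mul_inv_rev, Function.iterate_succ']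
    exact hF.comp t ih

lemma continuousOn_Fa_iterate (ha : 0 < a) (k : ℕ) : ContinuousOn (Fa a)^[k] (Ici a) :=
  fun _ ht => (hasDerivAt_Fa_iterate ha ht k).continuousAt.continuousWithinAt

lemma continuousOn_excessSum (ha : 1 < a) : ContinuousOn (excessSum a) (Ici a) := by
  have ha0 : 0 < a := one_pos.trans ha
  refine continuousOn_of_locally_continuousOn fun x (hx : a ≤ x) => ⟨Iio (x + 1), isOpen_Iio,
    lt_add_one x, ?_⟩
  have hxM : a ≤ x + 1 := by linarith
  -- Weierstrass M-test on `[a, x + 1)`, dominated by the (monotone) terms at `x + 1`.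
  refine continuousOn_tsum (fun k => ((continuousOn_Fa_iterate ha0 (k + 1)).mono
    inter_subset_left).sub continuousOn_const) (summable_Fa_iterate_succ_sub ha hxM)
    fun k y ⟨hy, hyx⟩ => ?_
  rw [norm_of_nonneg (sub_nonneg.2 (le_Fa_iterate ha0 hy _))]
  exact sub_le_sub_right
    ((strictMonoOn_Fa_iterate ha0 (k + 1)).monotoneOn hy hxM (le_of_lt hyx)) a

lemma Fa_iterate_div_eq_exp (ha : 0 < a) (hu : a ≤ u) (k : ℕ) :
    (Fa a)^[k] u / a = exp ((Fa a)^[k + 1] u - a) := by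
  have hk := ha.trans_le (le_Fa_iterate ha hu k)
  rw [Function.iterate_succ_apply', Fa_sub_self_eq_log_div ha.ne' hk.ne', exp_log (by positivity)]

lemma hasProd_Fa_iterate_div (ha : 1 < a) (hu : a ≤ u) :
    HasProd (fun k : ℕ => (Fa a)^[k] u / a) (exp (excessSum a u)) := by
  rw [show (fun k : ℕ => (Fa a)^[k] u / a) = exp ∘ fun k => (Fa a)^[k + 1] u - a from
    funext (Fa_iterate_div_eq_exp (one_pos.trans ha) hu)]
  exact (summable_Fa_iterate_succ_sub ha hu).hasSum.rexp

lemma Ftilde_eq_mul_exp (ha : 1 < a) (hu : a ≤ u) : Ftilde a u = a * exp (excessSum a u) := by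
  rw [Ftilde, (hasProd_Fa_iterate_div ha hu).tprod_eq]

lemma le_Ftilde (ha : 1 < a) (hu : a ≤ u) : u ≤ Ftilde a u := by
  have ha0 : 0 < a := one_pos.trans ha
  have hS : log (u / a) ≤ excessSum a u := by
    rw [← Fa_sub_self_eq_log_div ha0.ne' (ha0.trans_le hu).ne']
    exact (summable_Fa_iterate_succ_sub ha hu).le_tsum 0 fun k _ =>
      sub_nonneg.2 (le_Fa_iterate ha0 hu _)
  calc u = a * exp (log (u / a)) := by
        rw [exp_log (div_pos (ha0.trans_le hu) ha0)]; field_simp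
    _ ≤ Ftilde a u := by rw [Ftilde_eq_mul_exp ha hu]; gcongr

lemma continuousOn_inv_prod_Fa_iterate (ha : 0 < a) (k : ℕ) :
    ContinuousOn (fun t => (∏ j ∈ Finset.range k, (Fa a)^[j] t)⁻¹) (Ici a) :=
  (continuousOn_finsetProd _ fun j _ => continuousOn_Fa_iterate ha j).inv₀ fun _ ht =>
    (Finset.prod_pos fun j _ => ha.trans_le (le_Fa_iterate ha ht j)).ne'

lemma integral_inv_prod_Fa_iterate (ha : 0 < a) (hu : a ≤ u) (k : ℕ) :
    ∫ t in a..u, (∏ j ∈ Finset.range (k + 1), (Fa a)^[j] t)⁻¹ = (Fa a)^[k + 1] u - a := by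
  have hcont := (continuousOn_inv_prod_Fa_iterate ha (k + 1)).mono
    (Icc_subset_Ici_self : Icc a u ⊆ _)
  rw [intervalIntegral.integral_eq_sub_of_hasDerivAt
    (fun t ht => hasDerivAt_Fa_iterate ha (uIcc_of_le hu ▸ ht).1 (k + 1))
    (hcont.intervalIntegrable_of_Icc hu), Fa_iterate_self]

lemma integral_tsum_inv_prod_Fa_iterate (ha : 1 < a) (hu : a ≤ u) :
    ∫ t in a..u, ∑' k : ℕ, (∏ j ∈ Finset.range (k + 1), (Fa a)^[j] t)⁻¹ =
      excessSum a u := by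
  have ha0 : 0 < a := one_pos.trans ha
  set g : ℕ → ℝ → ℝ := fun k t => (∏ j ∈ Finset.range (k + 1), (Fa a)^[j] t)⁻¹
  have hterm (k : ℕ) : ∫ t in Ioc a u, g k t = (Fa a)^[k + 1] u - a := by
    rw [← intervalIntegral.integral_of_le hu, integral_inv_prod_Fa_iterate ha0 hu]
  have hint (k : ℕ) : IntegrableOn (g k) (Ioc a u) :=
    ((continuousOn_inv_prod_Fa_iterate ha0 (k + 1)).mono Icc_subset_Ici_self).integrableOn_Icc
      |>.mono_set Ioc_subset_Icc_self
  have hnorm (k : ℕ) : ∫ t in Ioc a u, ‖g k t‖ = (Fa a)^[k + 1] u - a := by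
    rw [← hterm]
    refine setIntegral_congr_fun measurableSet_Ioc fun t ht => norm_of_nonneg ?_
    exact inv_nonneg.2 (Finset.prod_nonneg fun j _ =>
      (ha0.trans_le (le_Fa_iterate ha0 ht.1.le j)).le)
  rw [intervalIntegral.integral_of_le hu, ← integral_tsum_of_summable_integral_norm hint
    (by simpa only [hnorm] using summable_Fa_iterate_succ_sub ha hu), excessSum]
  exact tsum_congr hterm

/-- For each `u ≥ a` the infinite product `∏_{k=0}^∞ (F^k(u)/a)` converges to a positive
real, so `F̃` is well defined; `F̃(a) = a`; `F̃` is strictly increasing and continuous on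
`[a,∞)` with `F̃(u) → ∞` as `u → ∞`; and `F̃(u) = exp(V(u))` where
`V(u) = log a + ∫_a^u (∑_{k=0}^∞ 1/∏_{j=0}^k F^j(t)) dt`. -/
theorem stmt2 (a : ℝ) (ha : 1 < a) :
    (∀ u : ℝ, a ≤ u → Multipliable (fun k : ℕ => (Fa a)^[k] u / a) ∧
      0 < ∏' k : ℕ, ((Fa a)^[k] u / a)) ∧
    Ftilde a a = a ∧
    StrictMonoOn (Ftilde a) (Set.Ici a) ∧
    ContinuousOn (Ftilde a) (Set.Ici a) ∧
    Filter.Tendsto (Ftilde a) Filter.atTop Filter.atTop ∧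
    (∀ u : ℝ, a ≤ u → Ftilde a u =
      Real.exp (Real.log a +
        ∫ t in a..u, ∑' k : ℕ, 1 / ∏ j ∈ Finset.range (k + 1), (Fa a)^[j] t)) := by
  refine ⟨fun u hu => ⟨(hasProd_Fa_iterate_div ha hu).multipliable, ?_⟩, ?_, ?_, ?_, ?_, ?_⟩
  · rw [(hasProd_Fa_iterate_div ha hu).tprod_eq]
    exact exp_pos _
  · rw [Ftilde_eq_mul_exp ha le_rfl, excessSum_self, exp_zero, mul_one]
  · intro u hu v hv huv
    rw [Ftilde_eq_mul_exp ha hu, Ftilde_eq_mul_exp ha hv]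
    gcongr
    exact strictMonoOn_excessSum ha hu hv huv
  · exact (continuousOn_const.mul (continuousOn_excessSum ha).rexp).congr
      fun u hu => Ftilde_eq_mul_exp ha hu
  · exact tendsto_atTop_mono' atTop ((eventually_ge_atTop a).mono fun u hu => le_Ftilde ha hu)
      tendsto_id
  · intro u hu
    simp_rw [one_div]
    rw [Ftilde_eq_mul_exp ha hu, integral_tsum_inv_prod_Fa_iterate ha hu, exp_add,
      exp_log (one_pos.trans ha)]
end

section
/- The super-logarithm L is continuous and strictly increasing on (0,∞) with L(1) = 0, L(r) → −∞ as r → 0+ and L(r) → ∞ as r → ∞ (so L is a bijection of (0,∞) onto ℝ); L is differentiable on (0,∞); L is concave on [1,∞); and if moreover a ≥ 2, then L is concave on all of (0,∞). -/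
open Real MeasureTheory Filter Topology Set

/-- The super-logarithm: `L(r) = φ(ar) - a` for `r ≥ 1` and `L(r) = -L(1/r)` for `0 < r < 1`. -/
noncomputable def superLog (a : ℝ) (r : ℝ) : ℝ :=
  if 1 ≤ r then phiFun a (a * r) - a else -(phiFun a (a * (1 / r)) - a)

/-!
On `[a, ∞)` the map `F` fixes `a` and contracts distances by the factor `1 / a`, so
`log F̃(u) = log a + ∑_{k ≥ 1} (F^k u - a)` converges, is continuous and monotone in `u`,
and shifting the orbit gives `F̃(F w) · w = a · F̃(w)`. Substituting the inverse
`u ↦ a e^{u - a}` of `F` into the integral turns this into `φ(a e^{u - a}) - a = a (φ(u) - a)`,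
which forces `φ` to be unbounded. The derivative of `L` is `a / F̃(a r)` for `r ≥ 1` and
`(a / r)² / (a F̃(a / r))` for `r ≤ 1`, both `1` at `r = 1`. The first is decreasing because
`F̃` is increasing; for `a ≥ 2` the contraction bound gives `F̃(v) / F̃(u) ≤ (v / u)²` for
`a ≤ u ≤ v`, so the second is decreasing too.
-/

theorem concaveOn_of_hasDerivAt_of_antitoneOn {D : Set ℝ} (hD : Convex ℝ D) {f f' : ℝ → ℝ}
    (hf : ContinuousOn f D) (hf' : ∀ x ∈ interior D, HasDerivAt f (f' x) x)
    (h_anti : AntitoneOn f' (interior D)) : ConcaveOn ℝ D f :=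
  (h_anti.congr fun x hx => (hf' x hx).deriv.symm).concaveOn_of_deriv hD hf
    fun x hx => (hf' x hx).differentiableAt.differentiableWithinAt

namespace SuperLog

variable {a u v w r : ℝ}

lemma Fa_self (a : ℝ) : Fa a a = a := by simp [Fa]

lemma Fa_sub_Fa (a u v : ℝ) : Fa a v - Fa a u = log v - log u := by simp only [Fa]; ring

lemma Fa_le_Fa (hu : 0 < u) (huv : u ≤ v) : Fa a u ≤ Fa a v := by
  simpa [Fa] using log_le_log hu huv

lemma le_Fa (ha : 0 < a) (hu : a ≤ u) : a ≤ Fa a u :=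
  (Fa_self a).symm.le.trans (Fa_le_Fa ha hu)

lemma Fa_sub_Fa_le (ha : 0 < a) (hu : a ≤ u) (huv : u ≤ v) : Fa a v - Fa a u ≤ (v - u) / a := by
  have hu0 : 0 < u := ha.trans_le hu
  calc Fa a v - Fa a u = log (v / u) := by
        rw [Fa_sub_Fa, log_div (hu0.trans_le huv).ne' hu0.ne']
    _ ≤ v / u - 1 := log_le_sub_one_of_pos (div_pos (hu0.trans_le huv) hu0)
    _ = (v - u) / u := by field_simp
    _ ≤ (v - u) / a := div_le_div_of_nonneg_left (by linarith) ha hu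

lemma le_iterate_Fa (ha : 0 < a) (hu : a ≤ u) (k : ℕ) : a ≤ (Fa a)^[k] u := by
  induction k with
  | zero => exact hu
  | succ k ih => rw [Function.iterate_succ_apply']; exact le_Fa ha ih

lemma iterate_Fa_le_iterate_Fa (ha : 0 < a) (hu : a ≤ u) (huv : u ≤ v) (k : ℕ) :
    (Fa a)^[k] u ≤ (Fa a)^[k] v := by
  induction k with
  | zero => exact huv
  | succ k ih =>
    simp only [Function.iterate_succ_apply']
    exact Fa_le_Fa (ha.trans_le (le_iterate_Fa ha hu k)) ih

lemma iterate_Fa_sub_le (ha : 0 < a) (hu : a ≤ u) (huv : u ≤ v) (k : ℕ) :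
    (Fa a)^[k] v - (Fa a)^[k] u ≤ (v - u) * a⁻¹ ^ k := by
  induction k with
  | zero => simp
  | succ k ih =>
    simp only [Function.iterate_succ_apply']
    calc Fa a ((Fa a)^[k] v) - Fa a ((Fa a)^[k] u)
        ≤ ((Fa a)^[k] v - (Fa a)^[k] u) / a :=
          Fa_sub_Fa_le ha (le_iterate_Fa ha hu k) (iterate_Fa_le_iterate_Fa ha hu huv k)
      _ ≤ (v - u) * a⁻¹ ^ k / a := by gcongr
      _ = (v - u) * a⁻¹ ^ (k + 1) := by rw [pow_succ]; ring

lemma summable_geometric_inv (ha : 1 < a) : Summable fun k : ℕ => a⁻¹ ^ k :=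
  summable_geometric_of_lt_one (by positivity) (inv_lt_one_of_one_lt₀ ha)

lemma summable_iterate_Fa_sub (ha : 1 < a) (hw : a ≤ w) :
    Summable fun k : ℕ => (Fa a)^[k] w - a := by
  refine .of_nonneg_of_le (fun k => sub_nonneg.2 (le_iterate_Fa (by linarith) hw k))
    (fun k => ?_) ((summable_geometric_inv ha).mul_left (w - a))
  simpa [Function.iterate_fixed (Fa_self a)] using iterate_Fa_sub_le (by linarith) le_rfl hw k

noncomputable def orbitSum (a w : ℝ) : ℝ := ∑' k : ℕ, ((Fa a)^[k] w - a)

lemma orbitSum_self (a : ℝ) : orbitSum a a = 0 := by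
  simp [orbitSum, Function.iterate_fixed (Fa_self a)]

lemma orbitSum_eq_sub_add (ha : 1 < a) (hw : a ≤ w) :
    orbitSum a w = w - a + orbitSum a (Fa a w) := by
  simp only [orbitSum, (summable_iterate_Fa_sub ha hw).tsum_eq_zero_add,
    Function.iterate_zero_apply, Function.iterate_succ_apply]

lemma orbitSum_mono (ha : 1 < a) (hv : a ≤ v) (hvw : v ≤ w) : orbitSum a v ≤ orbitSum a w :=
  Summable.tsum_le_tsum
    (fun k => sub_le_sub_right (iterate_Fa_le_iterate_Fa (by linarith) hv hvw k) a)
    (summable_iterate_Fa_sub ha hv) (summable_iterate_Fa_sub ha (hv.trans hvw))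

lemma orbitSum_sub_le (ha : 1 < a) (hv : a ≤ v) (hvw : v ≤ w) :
    orbitSum a w - orbitSum a v ≤ (w - v) * (1 - a⁻¹)⁻¹ := by
  rw [orbitSum, orbitSum, ← Summable.tsum_sub (summable_iterate_Fa_sub ha (hv.trans hvw))
    (summable_iterate_Fa_sub ha hv), ← tsum_geometric_of_lt_one (by positivity)
    (inv_lt_one_of_one_lt₀ ha), ← tsum_mul_left]
  refine Summable.tsum_le_tsum (fun k => ?_)
    ((summable_iterate_Fa_sub ha (hv.trans hvw)).sub (summable_iterate_Fa_sub ha hv))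
    ((summable_geometric_inv ha).mul_left _)
  simpa using iterate_Fa_sub_le (by linarith) hv hvw k

lemma continuousOn_orbitSum (ha : 1 < a) : ContinuousOn (orbitSum a) (Ici a) := by
  have hK : 0 ≤ (1 - a⁻¹)⁻¹ := inv_nonneg.2 (sub_nonneg.2 (inv_le_one_of_one_le₀ ha.le))
  refine (LipschitzOnWith.of_le_add_mul' (1 - a⁻¹)⁻¹ fun v hv w hw => ?_).continuousOn
  rw [Real.dist_eq]
  rcases le_total v w with hvw | hwv
  · linarith [orbitSum_mono ha hv hvw, mul_nonneg hK (abs_nonneg (v - w))]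
  · rw [abs_of_nonneg (sub_nonneg.2 hwv), mul_comm]
    linarith [orbitSum_sub_le ha hw hwv]

lemma log_iterate_Fa_div (ha : 0 < a) (hu : a ≤ u) (k : ℕ) :
    log ((Fa a)^[k] u / a) = (Fa a)^[k + 1] u - a := by
  rw [log_div (ha.trans_le (le_iterate_Fa ha hu k)).ne' ha.ne', Function.iterate_succ_apply']
  simp only [Fa]
  ring

lemma Ftilde_eq (ha : 1 < a) (hu : a ≤ u) : Ftilde a u = a * exp (orbitSum a (Fa a u)) := by
  have ha0 : 0 < a := by linarith
  have hsum : HasSum (fun k : ℕ => (Fa a)^[k + 1] u - a) (orbitSum a (Fa a u)) := by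
    simpa only [orbitSum, Function.iterate_succ_apply] using
      (summable_iterate_Fa_sub ha (le_Fa ha0 hu)).hasSum
  have hprod : HasProd (fun k : ℕ => (Fa a)^[k] u / a) (exp (orbitSum a (Fa a u))) := by
    convert hsum.rexp using 1
    ext k
    rw [Function.comp_apply, ← log_iterate_Fa_div ha0 hu,
      exp_log (div_pos (ha0.trans_le (le_iterate_Fa ha0 hu k)) ha0)]
  rw [Ftilde, hprod.tprod_eq]

lemma Ftilde_pos (ha : 1 < a) (hu : a ≤ u) : 0 < Ftilde a u := by
  rw [Ftilde_eq ha hu]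
  have : 0 < a := by linarith
  positivity

lemma Ftilde_self (ha : 1 < a) : Ftilde a a = a := by
  rw [Ftilde_eq ha le_rfl, Fa_self, orbitSum_self, exp_zero, mul_one]

lemma monotoneOn_Ftilde (ha : 1 < a) : MonotoneOn (Ftilde a) (Ici a) := by
  intro u (hu : a ≤ u) v (hv : a ≤ v) huv
  have ha0 : 0 < a := by linarith
  rw [Ftilde_eq ha hu, Ftilde_eq ha hv]
  gcongr
  exact orbitSum_mono ha (le_Fa ha0 hu) (Fa_le_Fa (ha0.trans_le hu) huv)

lemma Ftilde_Fa_mul (ha : 1 < a) (hw : a ≤ w) : Ftilde a (Fa a w) * w = a * Ftilde a w := by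
  have ha0 : 0 < a := by linarith
  have hexp : exp (Fa a w - a) = w / a := by
    rw [show Fa a w - a = log w - log a by simp only [Fa]; ring, exp_sub,
      exp_log (ha0.trans_le hw), exp_log ha0]
  rw [Ftilde_eq ha (le_Fa ha0 hw), Ftilde_eq ha hw, orbitSum_eq_sub_add ha (le_Fa ha0 hw),
    exp_add, hexp]
  field_simp

lemma monotoneOn_sq_div_Ftilde (ha : 2 ≤ a) :
    MonotoneOn (fun u => u ^ 2 / Ftilde a u) (Ici a) := by
  intro u (hu : a ≤ u) v (hv : a ≤ v) huv
  have ha1 : 1 < a := by linarith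
  have hu0 : 0 < u := by linarith
  have hK : (1 - a⁻¹)⁻¹ ≤ 2 :=
    inv_le_of_inv_le₀ two_pos (by linarith [inv_anti₀ two_pos ha])
  have hdist : orbitSum a (Fa a v) - orbitSum a (Fa a u) ≤ 2 * log (v / u) :=
    calc _ ≤ (Fa a v - Fa a u) * (1 - a⁻¹)⁻¹ :=
          orbitSum_sub_le ha1 (le_Fa (by linarith) hu) (Fa_le_Fa hu0 huv)
      _ ≤ log (v / u) * 2 := by
          rw [Fa_sub_Fa, ← log_div (hu0.trans_le huv).ne' hu0.ne']
          gcongr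
          exact log_nonneg ((one_le_div hu0).2 huv)
      _ = 2 * log (v / u) := mul_comm _ _
  have hratio : Ftilde a v ≤ Ftilde a u * (v / u) ^ 2 := by
    rw [Ftilde_eq ha1 hu, Ftilde_eq ha1 hv, ← exp_log (div_pos (hu0.trans_le huv) hu0),
      ← exp_nat_mul, mul_assoc, ← exp_add]
    gcongr
    push_cast
    linarith
  rw [div_le_div_iff₀ (Ftilde_pos ha1 hu) (Ftilde_pos ha1 hv)]
  calc u ^ 2 * Ftilde a v ≤ u ^ 2 * (Ftilde a u * (v / u) ^ 2) := by gcongr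
    _ = v ^ 2 * Ftilde a u := by field_simp

/-- `F̃` held constant at `F̃(a) = a` left of `a`, so that `1 / Fhat a` is continuous on `ℝ`. -/
noncomputable def Fhat (a t : ℝ) : ℝ := Ftilde a (max t a)

lemma Fhat_of_le (hu : a ≤ u) : Fhat a u = Ftilde a u := by rw [Fhat, max_eq_left hu]

lemma Fhat_pos (ha : 1 < a) (t : ℝ) : 0 < Fhat a t := Ftilde_pos ha (le_max_right t a)

lemma continuous_one_div_Fhat (ha : 1 < a) : Continuous fun t => 1 / Fhat a t := by
  have ha0 : 0 < a := by linarith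
  have hFa : ContinuousOn (Fa a) (Ici a) :=
    continuousOn_const.add (continuousOn_log.mono fun u (hu : a ≤ u) => (ha0.trans_le hu).ne')
  have hF : ContinuousOn (Ftilde a) (Ici a) :=
    (continuousOn_const.mul
      ((continuousOn_orbitSum ha).comp hFa fun u hu => le_Fa ha0 hu).rexp).congr
        fun u hu => Ftilde_eq ha hu
  exact continuous_const.div (hF.comp_continuous (continuous_id.max continuous_const)
    fun t => le_max_right t a) fun t => (Fhat_pos ha t).ne'

noncomputable def Phat (a u : ℝ) : ℝ := a + ∫ t in a..u, 1 / Fhat a t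

lemma phiFun_eq_Phat (hu : a ≤ u) : phiFun a u = Phat a u := by
  rw [phiFun, Phat, intervalIntegral.integral_congr fun t ht => ?_]
  rw [uIcc_of_le hu] at ht
  simp only [Fhat_of_le ht.1]

lemma Phat_self (a : ℝ) : Phat a a = a := by simp [Phat]

lemma hasDerivAt_Phat (ha : 1 < a) (u : ℝ) : HasDerivAt (Phat a) (1 / Fhat a u) u :=
  ((continuous_one_div_Fhat ha).integral_hasStrictDerivAt a u).hasDerivAt.const_add a

lemma strictMono_Phat (ha : 1 < a) : StrictMono (Phat a) :=
  strictMono_of_hasDerivAt_pos (hasDerivAt_Phat ha) fun u => one_div_pos.2 (Fhat_pos ha u)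

lemma Phat_mul_exp_sub (ha : 1 < a) (hu : a ≤ u) :
    Phat a (a * exp (u - a)) - a = a * (Phat a u - a) := by
  have ha0 : 0 < a := by linarith
  let G : ℝ → ℝ := fun x => a * exp (x - a)
  have hG : ∀ x, HasDerivAt G (G x) x := fun x => by
    simpa using ((hasDerivAt_id x).sub_const a).exp.const_mul a
  have hsubst := intervalIntegral.integral_comp_mul_deriv (a := a) (b := u) (fun x _ => hG x)
    (continuous_iff_continuousAt.2 fun x => (hG x).continuousAt).continuousOn
    (continuous_one_div_Fhat ha)
  have hGa : G a = a := by simp [G]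
  rw [hGa] at hsubst
  have hcongr : EqOn (fun x => ((fun t => 1 / Fhat a t) ∘ G) x * G x)
      (fun x => a * (1 / Fhat a x)) (uIcc a u) := by
    intro x hx
    have hx : a ≤ x := (uIcc_of_le hu ▸ hx).1
    have hGx : a ≤ G x := le_mul_of_one_le_right ha0.le (one_le_exp (by linarith))
    have hFG : Fa a (G x) = x := by
      simp only [Fa, G, log_mul ha0.ne' (exp_pos _).ne', log_exp]
      ring
    have hfun := Ftilde_Fa_mul ha hGx
    rw [hFG] at hfun
    have := Ftilde_pos ha hx
    have := Ftilde_pos ha hGx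
    simp only [Function.comp_apply, Fhat_of_le hGx, Fhat_of_le hx]
    field_simp
    linarith
  simp only [Phat, add_sub_cancel_left]
  rw [← hsubst, intervalIntegral.integral_congr hcongr, intervalIntegral.integral_const_mul]

lemma tendsto_Phat_atTop (ha : 1 < a) : Tendsto (Phat a) atTop atTop := by
  rcases tendsto_atTop_of_monotone (strictMono_Phat ha).monotone with h | ⟨l, hl⟩
  · exact h
  have hG : Tendsto (fun u => a * exp (u - a)) atTop atTop :=
    (tendsto_exp_atTop.comp (tendsto_atTop_add_const_right _ _ tendsto_id)).const_mul_atTop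
      (by linarith)
  have h1 : Tendsto (fun u => Phat a (a * exp (u - a)) - a) atTop (𝓝 (l - a)) :=
    (hl.comp hG).sub_const a
  have h2 : Tendsto (fun u => Phat a (a * exp (u - a)) - a) atTop (𝓝 (a * (l - a))) :=
    ((hl.sub_const a).const_mul a).congr'
      ((eventually_ge_atTop a).mono fun u hu => (Phat_mul_exp_sub ha hu).symm)
  have hfix : l - a = a * (l - a) := tendsto_nhds_unique h1 h2
  have hlt : a < l :=
    calc a = Phat a a := (Phat_self a).symm
      _ < Phat a (a + 1) := strictMono_Phat ha (lt_add_one a)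
      _ ≤ l := (strictMono_Phat ha).monotone.ge_of_tendsto hl _
  nlinarith

lemma Fhat_self (ha : 1 < a) : Fhat a a = a := by rw [Fhat_of_le le_rfl, Ftilde_self ha]

lemma superLog_of_one_le (ha : 0 < a) (hr : 1 ≤ r) : superLog a r = Phat a (a * r) - a := by
  rw [superLog, if_pos hr, phiFun_eq_Phat (le_mul_of_one_le_right ha.le hr)]

lemma superLog_of_le_one (ha : 0 < a) (hr0 : 0 < r) (hr : r ≤ 1) :
    superLog a r = a - Phat a (a / r) := by
  rcases hr.lt_or_eq with hr | rfl
  · rw [superLog, if_neg (not_le.2 hr), mul_one_div, phiFun_eq_Phat (le_div_self ha.le hr0 hr.le)]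
    ring
  · rw [superLog_of_one_le ha le_rfl, mul_one, div_one, Phat_self, sub_self]

lemma superLog_one (a : ℝ) : superLog a 1 = 0 := by simp [superLog, phiFun]

noncomputable def superLogDeriv (a r : ℝ) : ℝ :=
  if 1 ≤ r then a / Fhat a (a * r) else (a / r) ^ 2 / Fhat a (a / r) / a

lemma superLogDeriv_of_le_one (ha : 1 < a) (hr : r ≤ 1) :
    superLogDeriv a r = (a / r) ^ 2 / Fhat a (a / r) / a := by
  rcases hr.lt_or_eq with hr | rfl
  · rw [superLogDeriv, if_neg (not_le.2 hr)]
  · have : a ≠ 0 := by linarith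
    simp only [superLogDeriv, le_refl, if_true, mul_one, div_one, Fhat_self ha]
    field_simp

lemma superLogDeriv_pos (ha : 1 < a) (hr : 0 < r) : 0 < superLogDeriv a r := by
  have := Fhat_pos ha (a * r)
  have := Fhat_pos ha (a / r)
  have : 0 < a := by linarith
  unfold superLogDeriv
  split_ifs <;> positivity

lemma hasDerivAt_Phat_mul (ha : 1 < a) (r : ℝ) :
    HasDerivAt (fun r => Phat a (a * r) - a) (a / Fhat a (a * r)) r := by
  have := ((hasDerivAt_Phat ha (a * r)).comp r ((hasDerivAt_id r).const_mul a)).sub_const a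
  simpa [div_eq_inv_mul] using this

lemma hasDerivAt_sub_Phat_div (ha : 1 < a) (hr : r ≠ 0) :
    HasDerivAt (fun r => a - Phat a (a / r)) ((a / r) ^ 2 / Fhat a (a / r) / a) r := by
  have hinv : HasDerivAt (fun r => a / r) (-a / r ^ 2) r := by
    simpa [div_eq_mul_inv] using (hasDerivAt_inv hr).const_mul a
  refine (((hasDerivAt_Phat ha (a / r)).comp r hinv).const_sub a).congr_deriv ?_
  have : a ≠ 0 := by linarith
  field_simp

lemma hasDerivAt_superLog (ha : 1 < a) (hr : 0 < r) :
    HasDerivAt (superLog a) (superLogDeriv a r) r := by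
  have ha0 : 0 < a := by linarith
  rcases lt_trichotomy r 1 with hr1 | rfl | hr1
  · rw [superLogDeriv_of_le_one ha hr1.le]
    refine (hasDerivAt_sub_Phat_div ha hr.ne').congr_of_eventuallyEq ?_
    filter_upwards [Ioo_mem_nhds hr hr1] with x hx
    exact superLog_of_le_one ha0 hx.1 hx.2.le
  · have hright : HasDerivWithinAt (superLog a) (superLogDeriv a 1) (Ici 1) 1 := by
      rw [superLogDeriv, if_pos le_rfl]
      exact (hasDerivAt_Phat_mul ha 1).hasDerivWithinAt.congr
        (fun x hx => superLog_of_one_le ha0 hx) (superLog_of_one_le ha0 le_rfl)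
    have hleft : HasDerivWithinAt (superLog a) (superLogDeriv a 1) (Iic 1) 1 := by
      rw [superLogDeriv_of_le_one ha le_rfl]
      refine (hasDerivAt_sub_Phat_div ha one_ne_zero).hasDerivWithinAt.congr_of_eventuallyEq ?_
        (superLog_of_le_one ha0 one_pos le_rfl)
      filter_upwards [Ioc_mem_nhdsLE one_pos] with x hx
      exact superLog_of_le_one ha0 hx.1 hx.2
    simpa [Iic_union_Ici] using hleft.union hright
  · rw [superLogDeriv, if_pos hr1.le]
    refine (hasDerivAt_Phat_mul ha r).congr_of_eventuallyEq ?_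
    filter_upwards [Ioi_mem_nhds hr1] with x hx
    exact superLog_of_one_le ha0 (le_of_lt hx)

lemma antitoneOn_superLogDeriv_Ici (ha : 1 < a) : AntitoneOn (superLogDeriv a) (Ici 1) := by
  intro r (hr : 1 ≤ r) s (hs : 1 ≤ s) hrs
  have ha0 : 0 < a := by linarith
  have har : a ≤ a * r := le_mul_of_one_le_right ha0.le hr
  have hrs' : a * r ≤ a * s := by gcongr
  simp only [superLogDeriv, if_pos hr, if_pos hs, Fhat_of_le har, Fhat_of_le (har.trans hrs')]
  gcongr
  · exact Ftilde_pos ha har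
  · exact monotoneOn_Ftilde ha har (har.trans hrs') hrs'

lemma antitoneOn_superLogDeriv (ha : 2 ≤ a) : AntitoneOn (superLogDeriv a) (Ioi 0) := by
  have ha1 : 1 < a := by linarith
  have hleft : AntitoneOn (superLogDeriv a) (Ioc 0 1) := by
    intro r hr s hs hrs
    have has : a ≤ a / s := le_div_self (by linarith) hs.1 hs.2
    have hsr : a / s ≤ a / r := div_le_div_of_nonneg_left (by linarith) hr.1 hrs
    rw [superLogDeriv_of_le_one ha1 hr.2, superLogDeriv_of_le_one ha1 hs.2,
      Fhat_of_le has, Fhat_of_le (has.trans hsr)]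
    gcongr ?_ / a
    exact monotoneOn_sq_div_Ftilde ha has (has.trans hsr) hsr
  rw [← Ioc_union_Ici_eq_Ioi zero_lt_one]
  exact hleft.union_right (antitoneOn_superLogDeriv_Ici ha1) (isGreatest_Ioc zero_lt_one)
    isLeast_Ici

lemma tendsto_superLog_atTop (ha : 1 < a) : Tendsto (superLog a) atTop atTop := by
  have ha0 : 0 < a := by linarith
  refine (tendsto_atTop_add_const_right _ (-a)
    ((tendsto_Phat_atTop ha).comp (tendsto_id.const_mul_atTop ha0))).congr' ?_
  filter_upwards [eventually_ge_atTop 1] with r hr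
  rw [superLog_of_one_le ha0 hr]
  rfl

lemma tendsto_superLog_nhdsGT_zero (ha : 1 < a) : Tendsto (superLog a) (𝓝[>] 0) atBot := by
  have ha0 : 0 < a := by linarith
  have hdiv : Tendsto (fun r => a / r) (𝓝[>] 0) atTop := by
    simpa [div_eq_mul_inv] using tendsto_inv_nhdsGT_zero.const_mul_atTop ha0
  refine (tendsto_atBot_add_const_left _ a
    (tendsto_neg_atTop_atBot.comp ((tendsto_Phat_atTop ha).comp hdiv))).congr' ?_
  filter_upwards [Ioc_mem_nhdsGT one_pos] with r hr
  rw [superLog_of_le_one ha0 hr.1 hr.2]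
  rfl

end SuperLog

open SuperLog

/-- The super-logarithm `L` is continuous and strictly increasing on `(0,∞)` with
`L(1) = 0`, `L(r) → -∞` as `r → 0+` and `L(r) → ∞` as `r → ∞` (so `L` is a bijection of
`(0,∞)` onto `ℝ`); `L` is differentiable on `(0,∞)`; `L` is concave on `[1,∞)`; and if
moreover `a ≥ 2`, then `L` is concave on all of `(0,∞)`. -/
theorem stmt5 (a : ℝ) (ha : 1 < a) :
    ContinuousOn (superLog a) (Set.Ioi 0) ∧
    StrictMonoOn (superLog a) (Set.Ioi 0) ∧
    superLog a 1 = 0 ∧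
    Filter.Tendsto (superLog a) (nhdsWithin 0 (Set.Ioi 0)) Filter.atBot ∧
    Filter.Tendsto (superLog a) Filter.atTop Filter.atTop ∧
    Set.BijOn (superLog a) (Set.Ioi 0) Set.univ ∧
    (∀ r : ℝ, 0 < r → DifferentiableAt ℝ (superLog a) r) ∧
    ConcaveOn ℝ (Set.Ici 1) (superLog a) ∧
    (2 ≤ a → ConcaveOn ℝ (Set.Ioi 0) (superLog a)) := by
  have hderiv : ∀ r ∈ Ioi (0 : ℝ), HasDerivAt (superLog a) (superLogDeriv a r) r :=
    fun r hr => hasDerivAt_superLog ha hr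
  have hcont : ContinuousOn (superLog a) (Ioi 0) :=
    fun r hr => (hderiv r hr).continuousAt.continuousWithinAt
  have hmono : StrictMonoOn (superLog a) (Ioi 0) :=
    strictMonoOn_of_hasDerivWithinAt_pos (convex_Ioi 0) hcont
      (by simpa using fun r hr => (hderiv r hr).hasDerivWithinAt)
      (by simpa using fun r hr => superLogDeriv_pos ha hr)
  have hbot := tendsto_superLog_nhdsGT_zero ha
  have htop := tendsto_superLog_atTop ha
  have hsurj : SurjOn (superLog a) (Ioi 0) univ := fun y _ => by
    obtain ⟨x, hx⟩ := (hcont.comp_continuous continuous_exp exp_pos).surjective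
      (htop.comp tendsto_exp_atTop) (hbot.comp tendsto_exp_atBot_nhdsGT) y
    exact ⟨exp x, exp_pos x, hx⟩
  refine ⟨hcont, hmono, superLog_one a, hbot, htop, ⟨mapsTo_univ _ _, hmono.injOn, hsurj⟩,
    fun r hr => (hderiv r hr).differentiableAt, ?_, fun ha2 => ?_⟩
  · refine concaveOn_of_hasDerivAt_of_antitoneOn (f' := superLogDeriv a) (convex_Ici 1)
      (hcont.mono fun r (hr : 1 ≤ r) => zero_lt_one.trans_le hr) ?_ ?_
    · simpa using fun r (hr : 1 < r) => hderiv r (zero_lt_one.trans hr)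
    · simpa using (antitoneOn_superLogDeriv_Ici ha).mono Ioi_subset_Ici_self
  · exact concaveOn_of_hasDerivAt_of_antitoneOn (convex_Ioi 0) hcont (by simpa using hderiv)
      (by simpa using antitoneOn_superLogDeriv ha2)
end

section
/- Let 1 ≤ p < ∞, let g be admissible, and let u : ℝ^n → ℝ be Lebesgue measurable with μ_g[u](t) < ∞ for every t > 0. Then ∫_{ℝ^n} |u(x)|^p g(x) dx = ∫_{ℝ^n} R_g[u](x)^p g(x) dx (both sides possibly infinite). -/
open Real MeasureTheory Filter Topology Set

/-- The measure determined by `g`: `μ_g(A) = ∫_A g(x) dx`. -/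
noncomputable def muG (n : ℕ) (g : EuclideanSpace ℝ (Fin n) → ℝ)
    (A : Set (EuclideanSpace ℝ (Fin n))) : ENNReal :=
  ∫⁻ x in A, ENNReal.ofReal (g x)

/-- The distribution function of `u` with respect to `g`:
`μ_g[u](t) = μ_g({x : |u(x)| > t})`. -/
noncomputable def distG (n : ℕ) (g u : EuclideanSpace ℝ (Fin n) → ℝ) (t : ℝ) : ENNReal :=
  muG n g {x | t < |u x|}

/-- The rearrangement of `u` with respect to `g`:
`R_g[u](x) = sup {t ≥ 0 : μ_g[u](t) > μ_g(B_{|x|})}`. -/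
noncomputable def rearrG (n : ℕ) (g u : EuclideanSpace ℝ (Fin n) → ℝ)
    (x : EuclideanSpace ℝ (Fin n)) : ℝ :=
  sSup {t : ℝ | 0 ≤ t ∧ muG n g (Metric.ball 0 ‖x‖) < distG n g u t}

/-- `g` is admissible: locally integrable, radial, continuous away from the origin,
nonnegative, and nonincreasing in `|x|`. -/
def Admissible (n : ℕ) (g : EuclideanSpace ℝ (Fin n) → ℝ) : Prop :=
  MeasureTheory.LocallyIntegrable g MeasureTheory.volume ∧
  (∀ x y : EuclideanSpace ℝ (Fin n), ‖x‖ = ‖y‖ → g x = g y) ∧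
  ContinuousOn g {x : EuclideanSpace ℝ (Fin n) | x ≠ 0} ∧
  (∀ x : EuclideanSpace ℝ (Fin n), x ≠ 0 → 0 ≤ g x) ∧
  (∀ x y : EuclideanSpace ℝ (Fin n), x ≠ 0 → y ≠ 0 → ‖x‖ ≤ ‖y‖ → g y ≤ g x)

/-!
Both sides are `∫ f ^ p dμ_g` with `f = |u|` and `f = R_g[u]`, so by the layer-cake formula it
suffices that `μ_g{t < R_g[u]} = μ_g{t < |u|}` for `t > 0`. Since `μ_g[u]` is nonincreasing,
right-continuous and tends to `0`, away from the origin `t < R_g[u](x)` holds exactly when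
`μ_g(B_{|x|}) < μ_g[u](t)`. Spheres are `μ_g`-null and balls have finite `μ_g`-measure, so
`r ↦ μ_g(B_r)` is continuous and `μ_g{x : μ_g(B_{|x|}) < c} = c` for every `c ≤ μ_g(ℝⁿ)`; with
`c = μ_g[u](t)` this is the required equimeasurability. The remaining cases are degenerate: for
`n = 0` one has `R_g[u] = |u|` wherever `g > 0`, and a weight vanishing on a ball vanishes
everywhere by monotonicity.
-/

open Metric
open scoped ENNReal

section BallMeasure

variable {α : Type*} [PseudoMetricSpace α] [MeasurableSpace α] {μ : Measure α} {a : α}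
  {R : ℝ} {c : ℝ≥0∞}

lemma measure_ball_le_of_forall_lt (h : ∀ r < R, μ (ball a r) ≤ c) : μ (ball a R) ≤ c := by
  obtain ⟨r, hr_mono, hr_lt, hr_lim⟩ := exists_seq_strictMono_tendsto' (sub_one_lt R)
  have hball : ball a R = ⋃ k, ball a (r k) := by
    refine Subset.antisymm (fun y hy => ?_) (iUnion_subset fun k => ball_subset_ball (hr_lt k).2.le)
    obtain ⟨k, hk⟩ := (hr_lim.eventually (lt_mem_nhds (mem_ball.1 hy))).exists
    exact mem_iUnion.2 ⟨k, mem_ball.2 hk⟩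
  rw [hball, Monotone.measure_iUnion fun k l hkl => ball_subset_ball (hr_mono.monotone hkl)]
  exact iSup_le fun k => h _ (hr_lt k).2

lemma le_measure_closedBall_of_forall_gt [OpensMeasurableSpace α] (hfin : μ (ball a (R + 1)) ≠ ∞)
    (h : ∀ r > R, c ≤ μ (ball a r)) : c ≤ μ (closedBall a R) := by
  have hlim := tendsto_measure_biInter_gt (μ := μ) (s := ball a) (a := R)
    (fun _ _ => measurableSet_ball.nullMeasurableSet) (fun _ _ _ hij => ball_subset_ball hij)
    ⟨R + 1, lt_add_one R, hfin⟩
  rw [biInter_gt_ball] at hlim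
  exact ge_of_tendsto hlim (eventually_nhdsWithin_of_forall h)

end BallMeasure

section RadialSublevel

variable {E : Type*} [SeminormedAddCommGroup E] [MeasurableSpace E] {μ : Measure E}
  {c : ℝ≥0∞}

lemma measurableSet_setOf_measure_ball_norm_lt [OpensMeasurableSpace E] :
    MeasurableSet {y : E | μ (ball 0 ‖y‖) < c} := by
  have hlower : IsLowerSet {r : ℝ | μ (ball (0 : E) r) < c} := fun _ _ hrs hs =>
    (measure_mono (ball_subset_ball hrs)).trans_lt hs
  exact continuous_norm.measurable hlower.ordConnected.measurableSet

/-- The probability integral transform for the radial distribution function of `μ`. -/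
lemma measure_setOf_measure_ball_norm_lt [OpensMeasurableSpace E]
    (hsphere : ∀ r, μ (sphere 0 r) = 0) (hfin : ∀ r, μ (ball 0 r) ≠ ∞) (hcμ : c ≤ μ univ) :
    μ {y : E | μ (ball 0 ‖y‖) < c} = c := by
  rcases eq_or_ne c 0 with rfl | hc0
  · simp
  by_cases hT : ∃ r, c ≤ μ (ball (0 : E) r)
  swap
  · simp only [not_exists, not_le] at hT
    rw [show {y : E | μ (ball 0 ‖y‖) < c} = univ from eq_univ_of_forall fun y => hT ‖y‖]
    refine le_antisymm ?_ hcμ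
    rw [← iUnion_ball_nat (0 : E),
      Monotone.measure_iUnion fun k l hkl => ball_subset_ball (Nat.cast_le.2 hkl)]
    exact iSup_le fun k => (hT k).le
  set T := {r : ℝ | c ≤ μ (ball (0 : E) r)}
  have hbdd : BddBelow T := ⟨0, fun r hr => not_lt.1 fun hr0 => hc0 <| by
    simpa [T, ball_eq_empty.2 hr0.le] using hr⟩
  set R := sInf T
  have hlt : ∀ r < R, μ (ball (0 : E) r) < c := fun r hr =>
    not_le.1 fun hrT => (csInf_le hbdd hrT).not_gt hr
  have hge : ∀ r > R, c ≤ μ (ball (0 : E) r) := fun r hr => by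
    obtain ⟨s, hsT : c ≤ μ (ball 0 s), hsr⟩ := exists_lt_of_csInf_lt hT hr
    exact hsT.trans (measure_mono (ball_subset_ball hsr.le))
  have hR : μ (ball (0 : E) R) = c := by
    refine le_antisymm (measure_ball_le_of_forall_lt fun r hr => (hlt r hr).le) ?_
    calc c ≤ μ (closedBall 0 R) := le_measure_closedBall_of_forall_gt (hfin _) hge
      _ ≤ μ (ball 0 R) + μ (sphere 0 R) := by rw [← ball_union_sphere]; exact measure_union_le _ _
      _ = μ (ball 0 R) := by rw [hsphere, add_zero]
  have hset : {y : E | μ (ball 0 ‖y‖) < c} = ball 0 R := by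
    ext y
    change μ (ball 0 ‖y‖) < c ↔ y ∈ ball 0 R
    rw [mem_ball_zero_iff]
    exact ⟨fun hy => not_le.1 fun hRy => (hR ▸ measure_mono (ball_subset_ball hRy)).not_gt hy,
      hlt _⟩
  rw [hset, hR]

end RadialSublevel

section Superlevel

variable {X : Type*} [MeasurableSpace X] {μ : Measure X} {f : X → ℝ} {c : ℝ≥0∞}

lemma exists_gt_lt_measure_setOf_lt {t : ℝ} (h : c < μ {x | t < f x}) :
    ∃ s > t, c < μ {x | s < f x} := by
  obtain ⟨s, hs_anti, hs_gt, hs_lim⟩ := exists_seq_strictAnti_tendsto' (lt_add_one t)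
  have hunion : {x | t < f x} = ⋃ k, {x | s k < f x} := by
    refine Subset.antisymm (fun x hx => ?_)
      (iUnion_subset fun k x hx => (hs_gt k).1.trans hx)
    obtain ⟨k, hk⟩ := (hs_lim.eventually (gt_mem_nhds hx)).exists
    exact mem_iUnion.2 ⟨k, hk⟩
  have hmono : Monotone fun k => {x | s k < f x} := fun k l hkl x (hx : s k < f x) =>
    (hs_anti.antitone hkl).trans_lt hx
  rw [hunion, hmono.measure_iUnion, lt_iSup_iff] at h
  obtain ⟨k, hk⟩ := h
  exact ⟨s k, (hs_gt k).1, hk⟩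

lemma exists_measure_setOf_lt_lt (hf : Measurable f) {t₀ : ℝ} (hfin : μ {x | t₀ < f x} ≠ ∞)
    (hc : 0 < c) : ∃ s, μ {x | s < f x} < c := by
  have hempty : ⋂ k : ℕ, {x | (k : ℝ) < f x} = ∅ :=
    eq_empty_of_forall_notMem fun x hx => by
      obtain ⟨k, hk⟩ := exists_nat_gt (f x)
      exact (mem_iInter.1 hx k).not_gt hk
  have hanti : Antitone fun k : ℕ => {x | (k : ℝ) < f x} := fun k l hkl x (hx : (l : ℝ) < f x) =>
    (Nat.cast_le.2 hkl).trans_lt hx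
  have hlim := tendsto_measure_iInter_atTop (μ := μ)
    (fun k : ℕ => (measurableSet_lt measurable_const hf).nullMeasurableSet) hanti
    ⟨⌈t₀⌉₊, ne_top_of_le_ne_top hfin (measure_mono fun x hx => (Nat.le_ceil t₀).trans_lt hx)⟩
  rw [hempty, measure_empty] at hlim
  obtain ⟨k, hk⟩ := (hlim.eventually (gt_mem_nhds hc)).exists
  exact ⟨k, hk⟩

lemma lintegral_rpow_eq_of_measure_setOf_lt_eq {h : X → ℝ} (hf : Measurable f) (hh : Measurable h)
    (hf_nn : ∀ x, 0 ≤ f x) (hh_nn : ∀ x, 0 ≤ h x) {p : ℝ} (hp : 0 < p)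
    (heq : ∀ t > 0, μ {x | t < f x} = μ {x | t < h x}) :
    ∫⁻ x, ENNReal.ofReal (f x ^ p) ∂μ = ∫⁻ x, ENNReal.ofReal (h x ^ p) ∂μ := by
  rw [lintegral_rpow_eq_lintegral_meas_lt_mul μ (ae_of_all _ hf_nn) hf.aemeasurable hp,
    lintegral_rpow_eq_lintegral_meas_lt_mul μ (ae_of_all _ hh_nn) hh.aemeasurable hp]
  congr 1
  exact setLIntegral_congr_fun measurableSet_Ioi fun t ht => by rw [heq t ht]

end Superlevel

section Rearrangement

/-- `μ_g` as a measure. -/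
noncomputable abbrev weightedVolume (n : ℕ) (g : EuclideanSpace ℝ (Fin n) → ℝ) :
    Measure (EuclideanSpace ℝ (Fin n)) :=
  volume.withDensity fun x => ENNReal.ofReal (g x)

variable {n : ℕ} {g u : EuclideanSpace ℝ (Fin n) → ℝ}

lemma muG_eq_weightedVolume (A : Set (EuclideanSpace ℝ (Fin n))) :
    muG n g A = weightedVolume n g A :=
  (withDensity_apply' _ A).symm

lemma distG_eq_weightedVolume (t : ℝ) :
    distG n g u t = weightedVolume n g {x | t < |u x|} :=
  muG_eq_weightedVolume _

lemma lintegral_mul_ofReal_eq_lintegral_weightedVolume (hg : Measurable g)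
    (F : EuclideanSpace ℝ (Fin n) → ℝ≥0∞) :
    ∫⁻ x, F x * ENNReal.ofReal (g x) = ∫⁻ x, F x ∂weightedVolume n g := by
  rw [lintegral_withDensity_eq_lintegral_mul_non_measurable _ hg.ennreal_ofReal
    (ae_of_all _ fun _ => ENNReal.ofReal_lt_top)]
  simp only [Pi.mul_apply, mul_comm]

lemma weightedVolume_ball_ne_top (hg : LocallyIntegrable g volume) (r : ℝ) :
    weightedVolume n g (ball 0 r) ≠ ∞ := by
  rw [← muG_eq_weightedVolume]
  refine ne_top_of_le_ne_top ?_ (lintegral_mono_set ball_subset_closedBall)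
  exact (hg.integrableOn_isCompact (isCompact_closedBall 0 r)).lintegral_lt_top.ne

lemma rearrG_nonneg (x : EuclideanSpace ℝ (Fin n)) : 0 ≤ rearrG n g u x :=
  Real.sSup_nonneg fun _ ht => ht.1

-- `hK` bounds the set whose `sSup` defines `rearrG`, which would otherwise be the junk value `0`.
lemma lt_rearrG_iff {x : EuclideanSpace ℝ (Fin n)}
    (hK : ∃ K, distG n g u K ≤ muG n g (ball 0 ‖x‖)) {t : ℝ} (ht : 0 ≤ t) :
    t < rearrG n g u x ↔ muG n g (ball 0 ‖x‖) < distG n g u t := by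
  have hanti : Antitone (distG n g u) := fun s t hst =>
    lintegral_mono_set fun x (hx : t < |u x|) => hst.trans_lt hx
  set S := {s : ℝ | 0 ≤ s ∧ muG n g (ball 0 ‖x‖) < distG n g u s}
  change t < sSup S ↔ _
  obtain ⟨K, hK⟩ := hK
  have hbdd : BddAbove S := ⟨K, fun s hs => not_lt.1 fun hKs =>
    (hs.2.trans_le (hanti hKs.le)).not_ge hK⟩
  constructor
  · intro htR
    have hne : S.Nonempty := by
      by_contra hS
      rw [not_nonempty_iff_eq_empty.1 hS, Real.sSup_empty] at htR
      exact htR.not_ge ht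
    obtain ⟨s, hs, hts⟩ := exists_lt_of_lt_csSup hne htR
    exact hs.2.trans_le (hanti hts.le)
  · intro hlt
    rw [distG_eq_weightedVolume] at hlt
    obtain ⟨s, hts, hs⟩ := exists_gt_lt_measure_setOf_lt hlt
    rw [← distG_eq_weightedVolume] at hs
    exact hts.trans_le (le_csSup hbdd ⟨ht.trans hts.le, hs⟩)

lemma setOf_lt_rearrG_diff_zero (hu : Measurable u) (hfin : ∀ t : ℝ, 0 < t → distG n g u t < ⊤)
    (hpos : ∀ r : ℝ, 0 < r → 0 < muG n g (ball 0 r)) {t : ℝ} (ht : 0 ≤ t) :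
    {x | t < rearrG n g u x} \ {0} = {x | muG n g (ball 0 ‖x‖) < distG n g u t} \ {0} := by
  ext x
  simp only [Set.mem_sdiff, mem_singleton_iff, and_congr_left_iff]
  intro hx
  refine lt_rearrG_iff ?_ ht
  simp only [distG_eq_weightedVolume] at hfin ⊢
  obtain ⟨K, hK⟩ :=
    exists_measure_setOf_lt_lt hu.abs (hfin 1 one_pos).ne (hpos _ (norm_pos_iff.2 hx))
  exact ⟨K, hK.le⟩

lemma measurable_rearrG (hu : Measurable u) (hfin : ∀ t : ℝ, 0 < t → distG n g u t < ⊤)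
    (hpos : ∀ r : ℝ, 0 < r → 0 < muG n g (ball 0 r)) : Measurable (rearrG n g u) := by
  refine measurable_of_Ioi fun t => ?_
  rcases lt_or_ge t 0 with ht | ht
  · rw [show rearrG n g u ⁻¹' Ioi t = univ from
      eq_univ_of_forall fun x => ht.trans_le (rearrG_nonneg x)]
    exact .univ
  rw [← sdiff_union_inter (rearrG n g u ⁻¹' Ioi t) {0}]
  refine MeasurableSet.union ?_ (subsingleton_singleton.anti inter_subset_right).measurableSet
  rw [show rearrG n g u ⁻¹' Ioi t = {x | t < rearrG n g u x} from rfl,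
    setOf_lt_rearrG_diff_zero hu hfin hpos ht]
  simp only [muG_eq_weightedVolume]
  exact measurableSet_setOf_measure_ball_norm_lt.diff (measurableSet_singleton 0)

lemma weightedVolume_setOf_lt_rearrG (hn : n ≠ 0) (hg : LocallyIntegrable g volume)
    (hu : Measurable u) (hfin : ∀ t : ℝ, 0 < t → distG n g u t < ⊤)
    (hpos : ∀ r : ℝ, 0 < r → 0 < muG n g (ball 0 r)) {t : ℝ} (ht : 0 < t) :
    weightedVolume n g {x | t < rearrG n g u x} = weightedVolume n g {x | t < |u x|} := by
  have : NeZero n := ⟨hn⟩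
  rw [← measure_sdiff_null (measure_singleton 0), setOf_lt_rearrG_diff_zero hu hfin hpos ht.le,
    measure_sdiff_null (measure_singleton 0)]
  simp only [muG_eq_weightedVolume]
  rw [distG_eq_weightedVolume]
  exact measure_setOf_measure_ball_norm_lt
    (fun r => withDensity_absolutelyContinuous _ _ (Measure.addHaar_sphere _ 0 r))
    (weightedVolume_ball_ne_top hg) (measure_mono (subset_univ _))

lemma weightedVolume_eq_zero_of_muG_ball_eq_zero (hn : n ≠ 0) (hgm : Measurable g)
    (hmon : ∀ x y : EuclideanSpace ℝ (Fin n), x ≠ 0 → y ≠ 0 → ‖x‖ ≤ ‖y‖ → g y ≤ g x)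
    {r : ℝ} (hr : 0 < r) (h0 : muG n g (ball 0 r) = 0) : weightedVolume n g = 0 := by
  have : NeZero n := ⟨hn⟩
  have hnonpos : ∀ y ≠ 0, g y ≤ 0 := by
    intro y hy
    by_contra! hgy
    set ρ := min r ‖y‖
    have hρ : 0 < ρ := lt_min hr (norm_pos_iff.2 hy)
    have hle : ENNReal.ofReal (g y) * volume (ball (0 : EuclideanSpace ℝ (Fin n)) ρ) ≤ 0 := calc
      _ = ∫⁻ _ in ball (0 : EuclideanSpace ℝ (Fin n)) ρ, ENNReal.ofReal (g y) :=
        (setLIntegral_const _ _).symm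
      _ ≤ ∫⁻ x in ball 0 ρ, ENNReal.ofReal (g x) := by
        refine setLIntegral_mono_ae' measurableSet_ball ?_
        filter_upwards [Measure.ae_ne volume 0] with x hx hxρ
        exact ENNReal.ofReal_le_ofReal <|
          hmon x y hx hy ((mem_ball_zero_iff.1 hxρ).le.trans (min_le_right _ _))
      _ ≤ muG n g (ball 0 r) := lintegral_mono_set (ball_subset_ball (min_le_left _ _))
      _ = 0 := h0
    exact (ENNReal.mul_pos (ENNReal.ofReal_pos.2 hgy).ne' (measure_ball_pos _ _ hρ).ne').not_ge hle
  rw [withDensity_eq_zero_iff hgm.ennreal_ofReal.aemeasurable]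
  filter_upwards [Measure.ae_ne volume 0] with x hx
  exact ENNReal.ofReal_eq_zero.2 (hnonpos x hx)

lemma rearrG_eq_abs_of_dim_zero {g u : EuclideanSpace ℝ (Fin 0) → ℝ}
    {x : EuclideanSpace ℝ (Fin 0)} (hgx : 0 < g x) : rearrG 0 g u x = |u x| := by
  have hball : muG 0 g (ball 0 ‖x‖) = 0 := by
    rw [Subsingleton.elim x 0, norm_zero, ball_zero, muG, Measure.restrict_empty,
      lintegral_zero_measure]
  have hdist : ∀ t, 0 < distG 0 g u t ↔ t < |u x| := by
    intro t
    by_cases htx : t < |u x|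
    · have : {y | t < |u y|} = univ := eq_univ_of_forall fun y => Subsingleton.elim x y ▸ htx
      have hconst : (fun y => ENNReal.ofReal (g y)) = fun _ => ENNReal.ofReal (g x) :=
        funext fun y => by rw [Subsingleton.elim y x]
      rw [distG, muG, this, Measure.restrict_univ, hconst, lintegral_const]
      simp only [htx, iff_true]
      exact ENNReal.mul_pos (ENNReal.ofReal_pos.2 hgx).ne' (NeZero.ne _)
    · have : {y | t < |u y|} = ∅ := eq_empty_of_forall_notMem fun y => Subsingleton.elim x y ▸ htx
      simp [htx, distG, muG, this]
  have key : ∀ t ≥ 0, t < rearrG 0 g u x ↔ t < |u x| := fun t ht => by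
    rw [lt_rearrG_iff ⟨|u x|, by rw [hball, ← not_lt, hdist]; exact lt_irrefl _⟩ ht, hball, hdist]
  rcases lt_trichotomy (rearrG 0 g u x) |u x| with h | h | h
  · exact absurd ((key _ (rearrG_nonneg x)).2 h) (lt_irrefl _)
  · exact h
  · exact absurd ((key _ (abs_nonneg _)).1 h) (lt_irrefl _)

end Rearrangement

/-- If `1 ≤ p < ∞`, `g` is admissible and `u` is measurable with finite distribution
function for every `t > 0`, then `∫ |u|^p g = ∫ (R_g[u])^p g` (both sides possibly
infinite). -/
theorem stmt10 (n : ℕ) (p : ℝ) (hp : 1 ≤ p) (g u : EuclideanSpace ℝ (Fin n) → ℝ)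
    (hg : Admissible n g) (hu : Measurable u)
    (hfin : ∀ t : ℝ, 0 < t → distG n g u t < ⊤) :
    ∫⁻ x, ENNReal.ofReal (|u x| ^ p) * ENNReal.ofReal (g x) =
      ∫⁻ x, ENNReal.ofReal ((rearrG n g u x) ^ p) * ENNReal.ofReal (g x) := by
  obtain ⟨hgl, -, hcont, -, hmon⟩ := hg
  rcases eq_or_ne n 0 with rfl | hn
  · refine lintegral_congr fun x => ?_
    rcases le_or_gt (g x) 0 with hgx | hgx
    · simp [ENNReal.ofReal_eq_zero.2 hgx]
    · rw [rearrG_eq_abs_of_dim_zero hgx]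
  have hgm : Measurable g := measurable_of_continuousOn_compl_singleton 0 hcont
  simp only [lintegral_mul_ofReal_eq_lintegral_weightedVolume hgm]
  by_cases hpos : ∀ r : ℝ, 0 < r → 0 < muG n g (ball 0 r)
  · exact lintegral_rpow_eq_of_measure_setOf_lt_eq hu.abs (measurable_rearrG hu hfin hpos)
      (fun x => abs_nonneg _) rearrG_nonneg (by linarith)
      fun t ht => (weightedVolume_setOf_lt_rearrG hn hgl hu hfin hpos ht).symm
  · simp only [not_forall, not_lt, nonpos_iff_eq_zero] at hpos
    obtain ⟨r, hr, h0⟩ := hpos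
    rw [weightedVolume_eq_zero_of_muG_ball_eq_zero hn hgm hmon hr h0]
    simp
end
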